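/- Let x be a collision-free solution of the first-order singular Cucker–Smale system with β > 1. Then there exists a constant C_m > 0 such that min_{i ≠ j} |x_i(t) − x_j(t)| ≥ C_m for all t ≥ 0; i.e., the relative distances between particles admit a uniform-in-time positive lower bound. -/

import Mathlib

/-!
For a configuration whose closest pair `z i < z j` is at distance `d`, every other particle lies
outside `[z i, z j]`, and the particles on each side are `d`-separated. By concavity of `Φ` on
`(0, ∞)` the particles on one side, `n` of them, change the relative velocity of the pair by at
least `Φ(d) - Φ((n + 1) d)`, while the pair itself contributes `-2 Φ(d)`. So the gap grows at rate
at least `ν j - ν i - (2κ/N) Φ(N d)`, which is positive for small `d` since `Φ(d) → -∞` as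
`d → 0⁺`. Consequently no distance can ever drop to a level `c` below this threshold and below all
initial distances: at the first time one does, the closest pair would have been closer just before.
-/

open Real Filter Set Topology

/-- The potential function `Φ(x) = sign(x)·(β−1)⁻¹(1 − |x|^{1−β})` (with `Φ(0)=0`). -/
noncomputable def PhiCS (β y : ℝ) : ℝ := Real.sign y * (1 - |y| ^ (1 - β)) / (β - 1)

/-- A collision-free solution on `[0,∞)` of the first-order singular Cucker–Smale
system with short-range interaction:
`x_i'(t) = ν_i + (κ/N) Σ_{k≠i} Φ(x_k(t) − x_i(t))`, with `Σ_i x_i(0) = 0` and no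
collisions for all `t ≥ 0`. -/
def IsCFSol (N : ℕ) (β κ : ℝ) (ν : Fin N → ℝ) (x : ℝ → Fin N → ℝ) : Prop :=
  (∀ t ≥ (0:ℝ), ∀ i j : Fin N, i ≠ j → x t i ≠ x t j) ∧
  (∑ i, x 0 i = 0) ∧
  ∀ i, ∀ t ≥ (0:ℝ), HasDerivWithinAt (fun s => x s i)
    (ν i + (κ / (N:ℝ)) * ∑ k ∈ Finset.univ.erase i, PhiCS β (x t k - x t i)) (Set.Ici 0) t

theorem convexOn_rpow_of_nonpos {p : ℝ} (hp : p ≤ 0) :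
    ConvexOn ℝ (Ioi 0) fun x : ℝ ↦ x ^ p := by
  have hderiv : ∀ x ∈ Ioi (0 : ℝ), HasDerivAt (fun x : ℝ ↦ x ^ p) (p * x ^ (p - 1)) x :=
    fun x hx ↦ Real.hasDerivAt_rpow_const (Or.inl (ne_of_gt hx))
  refine MonotoneOn.convexOn_of_deriv (convex_Ioi 0)
    (fun x hx ↦ (hderiv x hx).continuousAt.continuousWithinAt)
    (fun x hx ↦ (hderiv x (interior_subset hx)).differentiableAt.differentiableWithinAt) ?_
  rw [interior_Ioi]
  intro x hx y hy hxy
  rw [(hderiv x hx).deriv, (hderiv y hy).deriv]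
  exact mul_le_mul_of_nonpos_left (rpow_le_rpow_of_nonpos hx hxy (by linarith)) hp

theorem ConcaveOn.map_add_sub_map_le {f : ℝ → ℝ} {a w d : ℝ} (hf : ConcaveOn ℝ (Ici a) f)
    (hw : a ≤ w) (hd : 0 ≤ d) : f (w + d) - f w ≤ f (a + d) - f a := by
  rcases (add_nonneg (sub_nonneg.2 hw) hd).eq_or_lt with hL | hL
  · obtain rfl : w = a := by linarith
    obtain rfl : d = 0 := by linarith
    simp
  -- `a + d` and `w` are the convex combinations of `a` and `w + d` with swapped weights
  set θ := (w - a) / (w - a + d)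
  have hθ₀ : 0 ≤ θ := div_nonneg (sub_nonneg.2 hw) hL.le
  have hθ₁ : θ ≤ 1 := div_le_one_of_le₀ (by linarith) hL.le
  have hθ : θ * (w - a + d) = w - a := div_mul_cancel₀ _ hL.ne'
  have hmid : θ * a + (1 - θ) * (w + d) = a + d := by linear_combination -hθ
  have hw' : (1 - θ) * a + θ * (w + d) = w := by linear_combination hθ
  have ha : a ∈ Ici a := mem_Ici.2 le_rfl
  have hwd : w + d ∈ Ici a := mem_Ici.2 (by linarith)
  have h₁ := hf.2 ha hwd hθ₀ (sub_nonneg.2 hθ₁) (add_sub_cancel θ 1)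
  have h₂ := hf.2 ha hwd (sub_nonneg.2 hθ₁) hθ₀ (sub_add_cancel 1 θ)
  simp only [smul_eq_mul, hmid, hw'] at h₁ h₂
  linarith

theorem ConcaveOn.sum_map_add_sub_map_le {ι : Type*} {f : ℝ → ℝ} {a d : ℝ}
    (hf : ConcaveOn ℝ (Ici a) f) (hd : 0 ≤ d) (s : Finset ι) {w : ι → ℝ}
    (ha : ∀ k ∈ s, a ≤ w k) (hsep : ∀ k ∈ s, ∀ l ∈ s, k ≠ l → d ≤ |w k - w l|) :
    ∑ k ∈ s, (f (w k + d) - f (w k)) ≤ f (a + s.card * d) - f a := by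
  classical
  induction s using Finset.induction_on_min_value w generalizing a with
  | empty => simp
  | insert k s hks hmin ih =>
    have hk : a ≤ w k := ha k (Finset.mem_insert_self k s)
    have hrest : ∀ l ∈ s, a + d ≤ w l := fun l hl ↦ by
      have h := hsep l (Finset.mem_insert_of_mem hl) k (Finset.mem_insert_self k s)
        (ne_of_mem_of_not_mem hl hks)
      rw [abs_of_nonneg (sub_nonneg.2 (hmin l hl))] at h
      linarith
    have hf' : ConcaveOn ℝ (Ici (a + d)) f :=
      hf.subset (Ici_subset_Ici.2 (le_add_of_nonneg_right hd)) (convex_Ici _)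
    have hs := ih hf' hrest fun k hk l hl ↦ hsep k (Finset.mem_insert_of_mem hk) l
      (Finset.mem_insert_of_mem hl)
    rw [Finset.sum_insert hks, Finset.card_insert_of_notMem hks, Nat.cast_succ,
      show a + (s.card + 1) * d = a + d + s.card * d by ring]
    linarith [hf.map_add_sub_map_le hk hd]

theorem HasDerivAt.eventually_lt_of_pos {g : ℝ → ℝ} {g' u : ℝ} (hg : HasDerivAt g g' u)
    (hpos : 0 < g') : ∀ᶠ s in 𝓝[<] u, g s < g u := by
  filter_upwards [((hasDerivAt_iff_tendsto_slope.1 hg).mono_left (nhdsLT_le_nhdsNE u)).eventually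
    (eventually_gt_nhds hpos), self_mem_nhdsWithin] with s hs hsu
  exact (slope_pos_iff_gt hsu).1 hs

theorem exists_first_hitting_time {ι : Type*} (P : Finset ι) {f : ι → ℝ → ℝ} {c t : ℝ}
    (ht : 0 ≤ t) (hf : ∀ p ∈ P, ContinuousOn (f p) (Icc 0 t)) (h0 : ∀ p ∈ P, c < f p 0)
    (hit : ∃ p ∈ P, f p t ≤ c) :
    ∃ u ∈ Ioc 0 t, (∃ p ∈ P, f p u ≤ c) ∧ ∀ s ∈ Ico 0 u, ∀ p ∈ P, c < f p s := by
  set K := ⋃ p ∈ P, Icc 0 t ∩ f p ⁻¹' Iic c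
  have hK : IsClosed K := isClosed_biUnion_finset fun p hp ↦
    (hf p hp).preimage_isClosed_of_isClosed isClosed_Icc isClosed_Iic
  have hmem : ∀ {s}, s ∈ K ↔ s ∈ Icc 0 t ∧ ∃ p ∈ P, f p s ≤ c := by
    simp only [K, mem_iUnion, mem_inter_iff, mem_preimage, mem_Iic, exists_prop]
    tauto
  have hbdd : BddBelow K := ⟨0, fun s hs ↦ (hmem.1 hs).1.1⟩
  obtain ⟨p, hp, hpt⟩ := hit
  have hu := hK.csInf_mem ⟨t, hmem.2 ⟨⟨ht, le_rfl⟩, p, hp, hpt⟩⟩ hbdd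
  obtain ⟨⟨hu0, hut⟩, q, hq, hqu⟩ := hmem.1 hu
  have hbefore : ∀ s ∈ Ico 0 (sInf K), ∀ p ∈ P, c < f p s := fun s hs p hp ↦
    lt_of_not_ge fun hps ↦ notMem_of_lt_csInf hs.2 hbdd
      (hmem.2 ⟨⟨hs.1, hs.2.le.trans hut⟩, p, hp, hps⟩)
  refine ⟨sInf K, ⟨hu0.lt_of_ne fun h ↦ ?_, hut⟩, ⟨q, hq, hqu⟩, hbefore⟩
  exact (h0 q hq).not_ge (h ▸ hqu)

section Potential

variable {β : ℝ}

theorem PhiCS_of_pos {y : ℝ} (hy : 0 < y) : PhiCS β y = (1 - y ^ (1 - β)) / (β - 1) := by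
  simp [PhiCS, Real.sign_of_pos hy, abs_of_pos hy]

theorem PhiCS_neg (y : ℝ) : PhiCS β (-y) = -PhiCS β y := by
  simp only [PhiCS, Real.sign_neg, abs_neg]
  ring

theorem concaveOn_PhiCS (hβ : 1 < β) : ConcaveOn ℝ (Ioi 0) (PhiCS β) := by
  have h := ((convexOn_rpow_of_nonpos (p := 1 - β) (by linarith)).neg.add_const 1).smul
    (inv_nonneg.2 (sub_pos.2 hβ).le)
  refine h.congr fun y hy ↦ ?_
  simp only [PhiCS_of_pos (mem_Ioi.1 hy), Pi.add_apply, Pi.neg_apply, smul_eq_mul]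
  ring

theorem monotoneOn_PhiCS (hβ : 1 < β) : MonotoneOn (PhiCS β) (Ioi 0) := fun a ha b hb hab ↦ by
  rw [PhiCS_of_pos ha, PhiCS_of_pos hb]
  exact div_le_div_of_nonneg_right
    (sub_le_sub_left (rpow_le_rpow_of_nonpos ha hab (by linarith)) 1) (by linarith)

theorem tendsto_PhiCS_nhdsGT_zero (hβ : 1 < β) : Tendsto (PhiCS β) (𝓝[>] 0) atBot := by
  have h : Tendsto (fun y : ℝ ↦ (1 - y ^ (1 - β)) / (β - 1)) (𝓝[>] 0) atBot := by
    simp_rw [sub_eq_add_neg (1 : ℝ)]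
    exact (tendsto_atBot_add_const_left _ 1 (tendsto_neg_atTop_atBot.comp
      (tendsto_rpow_neg_nhdsGT_zero (by linarith)))).atBot_div_const (by linarith)
  refine h.congr' ?_
  filter_upwards [self_mem_nhdsWithin] with y hy
  exact (PhiCS_of_pos hy).symm

end Potential

section ClosestPair

variable {ι : Type*} {β : ℝ} {z : ι → ℝ} {i j : ι}

def IsClosestPair (z : ι → ℝ) (i j : ι) : Prop :=
  z i < z j ∧ ∀ k l, k ≠ l → z j - z i ≤ |z k - z l|

theorem IsClosestPair.lt_or_lt (h : IsClosestPair z i j) {k : ι} (hki : k ≠ i) (hkj : k ≠ j) :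
    z j < z k ∨ z k < z i := by
  by_contra! hk
  have hi := h.2 k i hki
  have hj := h.2 j k hkj.symm
  rw [abs_of_nonneg (by linarith)] at hi hj
  linarith [h.1]

theorem IsClosestPair.le_sum_PhiCS_sub_of_right (h : IsClosestPair z i j) (hβ : 1 < β)
    (s : Finset ι) (hs : ∀ k ∈ s, z j < z k) :
    PhiCS β (z j - z i) - PhiCS β ((s.card + 1) * (z j - z i)) ≤
      ∑ k ∈ s, (PhiCS β (z k - z j) - PhiCS β (z k - z i)) := by
  set d := z j - z i
  have hd : 0 < d := sub_pos.2 h.1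
  have hf : ConcaveOn ℝ (Ici d) (PhiCS β) :=
    (concaveOn_PhiCS hβ).subset (Ici_subset_Ioi.2 hd) (convex_Ici d)
  have hsum := hf.sum_map_add_sub_map_le hd.le s (w := fun k ↦ z k - z j)
    (fun k hk ↦ by
      have hk' := h.2 k j fun hkj ↦ (hs k hk).ne (congrArg z hkj).symm
      rwa [abs_of_pos (sub_pos.2 (hs k hk))] at hk')
    (fun k _ l _ hkl ↦ by simpa only [sub_sub_sub_cancel_right] using h.2 k l hkl)
  simp only [show ∀ k, z k - z j + d = z k - z i from fun k ↦ by ring,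
    show d + s.card * d = (s.card + 1) * d by ring] at hsum
  rw [Finset.sum_sub_distrib] at hsum ⊢
  linarith

theorem IsClosestPair.le_sum_PhiCS_sub_of_left (h : IsClosestPair z i j) (hβ : 1 < β)
    (s : Finset ι) (hs : ∀ k ∈ s, z k < z i) :
    PhiCS β (z j - z i) - PhiCS β ((s.card + 1) * (z j - z i)) ≤
      ∑ k ∈ s, (PhiCS β (z k - z j) - PhiCS β (z k - z i)) := by
  -- reflect the configuration `z ↦ -z`, which swaps the roles of `i` and `j`
  have hrefl : IsClosestPair (fun k ↦ -z k) j i :=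
    ⟨neg_lt_neg h.1, fun k l hkl ↦ by
      simpa only [neg_sub_neg, abs_sub_comm (z l)] using h.2 k l hkl⟩
  have hsum := hrefl.le_sum_PhiCS_sub_of_right hβ s fun k hk ↦ neg_lt_neg (hs k hk)
  simp only [neg_sub_neg] at hsum
  refine hsum.trans_eq (Finset.sum_congr rfl fun k _ ↦ ?_)
  rw [← neg_sub (z k) (z i), ← neg_sub (z k) (z j), PhiCS_neg, PhiCS_neg]
  ring

theorem sum_erase_sub_sum_erase [Fintype ι] [DecidableEq ι] (g : ℝ → ℝ) (hij : i ≠ j) :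
    ∑ k ∈ Finset.univ.erase j, g (z k - z j) - ∑ k ∈ Finset.univ.erase i, g (z k - z i) =
      g (z i - z j) - g (z j - z i) +
        ∑ k ∈ (Finset.univ.erase j).erase i, (g (z k - z j) - g (z k - z i)) := by
  rw [← Finset.add_sum_erase _ _ (Finset.mem_erase.2 ⟨hij, Finset.mem_univ i⟩),
    ← Finset.add_sum_erase _ _ (Finset.mem_erase.2 ⟨hij.symm, Finset.mem_univ j⟩),
    Finset.erase_right_comm, Finset.sum_sub_distrib]
  ring

theorem IsClosestPair.neg_two_mul_PhiCS_le [Fintype ι] [DecidableEq ι]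
    (h : IsClosestPair z i j) (hβ : 1 < β) :
    -(2 * PhiCS β (Fintype.card ι * (z j - z i))) ≤
      ∑ k ∈ Finset.univ.erase j, PhiCS β (z k - z j) -
        ∑ k ∈ Finset.univ.erase i, PhiCS β (z k - z i) := by
  have hij : i ≠ j := fun hij ↦ h.1.ne (congrArg z hij)
  set d := z j - z i
  have hd : 0 < d := sub_pos.2 h.1
  set E := (Finset.univ.erase j).erase i
  have hcard : ∀ s ⊆ E, PhiCS β ((s.card + 1) * d) ≤ PhiCS β (Fintype.card ι * d) := by
    intro s hs
    have hE : E.card + 2 = Fintype.card ι := by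
      rw [Finset.card_erase_of_mem (Finset.mem_erase.2 ⟨hij, Finset.mem_univ i⟩),
        Finset.card_erase_of_mem (Finset.mem_univ j), Finset.card_univ]
      have := Fintype.one_lt_card_iff_nontrivial.2 ⟨i, j, hij⟩
      omega
    have hle : (s.card : ℝ) + 1 ≤ Fintype.card ι := by
      have := Finset.card_le_card hs
      exact_mod_cast (by omega : s.card + 1 ≤ Fintype.card ι)
    exact monotoneOn_PhiCS hβ (mem_Ioi.2 (by positivity)) (mem_Ioi.2 (by nlinarith))
      (mul_le_mul_of_nonneg_right hle hd.le)
  have hright := h.le_sum_PhiCS_sub_of_right hβ (E.filter (z j < z ·))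
    fun k hk ↦ (Finset.mem_filter.1 hk).2
  have hleft := h.le_sum_PhiCS_sub_of_left hβ (E.filter (¬ z j < z ·)) fun k hk ↦ by
    simp only [E, Finset.mem_filter, Finset.mem_erase] at hk
    exact (h.lt_or_lt hk.1.1 hk.1.2.1).resolve_left hk.2
  rw [sum_erase_sub_sum_erase _ hij, ← Finset.sum_filter_add_sum_filter_not E (z j < z ·),
    ← neg_sub (z j) (z i), PhiCS_neg]
  linarith [hcard _ (Finset.filter_subset (z j < z ·) E),
    hcard _ (Finset.filter_subset (¬ z j < z ·) E)]

theorem exists_isClosestPair [Fintype ι] [Nontrivial ι] (hz : Function.Injective z) :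
    ∃ i j, IsClosestPair z i j := by
  classical
  have hne : (Finset.univ.offDiag : Finset (ι × ι)).Nonempty := by
    obtain ⟨a, b, hab⟩ := exists_pair_ne ι
    exact ⟨(a, b), by simpa using hab⟩
  obtain ⟨⟨a, b⟩, hab, hmin⟩ := Finset.exists_min_image _ (fun p ↦ |z p.1 - z p.2|) hne
  have hmin' : ∀ k l, k ≠ l → |z a - z b| ≤ |z k - z l| := fun k l hkl ↦
    hmin (k, l) (by simpa using hkl)
  rcases (hz.ne (by simpa using hab) : z a ≠ z b).lt_or_gt with h | h
  · exact ⟨a, b, h, by rwa [abs_sub_comm, abs_of_pos (sub_pos.2 h)] at hmin'⟩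
  · exact ⟨b, a, h, by rwa [abs_of_pos (sub_pos.2 h)] at hmin'⟩

end ClosestPair

section Dynamics

variable {N : ℕ} {β κ : ℝ}

noncomputable def csVelocity (N : ℕ) (β κ : ℝ) (ν z : Fin N → ℝ) (i : Fin N) : ℝ :=
  ν i + (κ / (N : ℝ)) * ∑ k ∈ Finset.univ.erase i, PhiCS β (z k - z i)

theorem exists_csVelocity_lt_of_isClosestPair (hN : 0 < N) (hβ : 1 < β) (hκ : 0 < κ)
    (ν : Fin N → ℝ) :
    ∃ δ > 0, ∀ (z : Fin N → ℝ) (i j : Fin N), IsClosestPair z i j → z j - z i < δ →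
      csVelocity N β κ ν z i < csVelocity N β κ ν z j := by
  have hN' : (0 : ℝ) < N := Nat.cast_pos.2 hN
  have hscale : Tendsto (fun d : ℝ ↦ N * d) (𝓝[>] 0) (𝓝[>] 0) := by
    refine tendsto_nhdsWithin_iff.2 ⟨?_, ?_⟩
    · simpa using ((continuous_const_mul (N : ℝ)).tendsto 0).mono_left nhdsWithin_le_nhds
    · filter_upwards [self_mem_nhdsWithin] with d hd using mul_pos hN' hd
  have hrep : Tendsto (fun d ↦ κ / N * 2 * PhiCS β (N * d)) (𝓝[>] 0) atBot :=
    ((tendsto_PhiCS_nhdsGT_zero hβ).comp hscale).const_mul_atBot (by positivity)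
  have hev : ∀ᶠ d in 𝓝[>] 0, ∀ i j : Fin N, κ / N * 2 * PhiCS β (N * d) < ν j - ν i := by
    simp only [eventually_all]
    exact fun i j ↦ hrep.eventually_lt_atBot _
  obtain ⟨δ, hδ, hsub⟩ := mem_nhdsGT_iff_exists_Ioo_subset.1 hev
  refine ⟨δ, hδ, fun z i j hz hzδ ↦ ?_⟩
  have hν := hsub ⟨sub_pos.2 hz.1, hzδ⟩ i j
  have hint := hz.neg_two_mul_PhiCS_le hβ
  rw [Fintype.card_fin] at hint
  have := mul_le_mul_of_nonneg_left hint (by positivity : (0 : ℝ) ≤ κ / N)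
  simp only [csVelocity]
  linarith

end Dynamics

namespace IsCFSol

variable {N : ℕ} {β κ : ℝ} {ν : Fin N → ℝ} {x : ℝ → Fin N → ℝ}

theorem injective (hx : IsCFSol N β κ ν x) {t : ℝ} (ht : 0 ≤ t) : Function.Injective (x t) :=
  fun k l hkl ↦ by_contra fun h ↦ hx.1 t ht k l h hkl

theorem hasDerivWithinAt (hx : IsCFSol N β κ ν x) (k : Fin N) {t : ℝ} (ht : 0 ≤ t) :
    HasDerivWithinAt (fun s ↦ x s k) (csVelocity N β κ ν (x t) k) (Ici 0) t :=
  hx.2.2 k t ht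

theorem continuousOn (hx : IsCFSol N β κ ν x) (k : Fin N) :
    ContinuousOn (fun s ↦ x s k) (Ici 0) := fun _ ht ↦
  (hx.hasDerivWithinAt k ht).continuousWithinAt

theorem hasDerivAt_sub (hx : IsCFSol N β κ ν x) (k l : Fin N) {t : ℝ} (ht : 0 < t) :
    HasDerivAt (fun s ↦ x s l - x s k)
      (csVelocity N β κ ν (x t) l - csVelocity N β κ ν (x t) k) t :=
  ((hx.hasDerivWithinAt l ht.le).sub (hx.hasDerivWithinAt k ht.le)).hasDerivAt (Ici_mem_nhds ht)

end IsCFSol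

theorem stmt8_general (N : ℕ) (hN : 2 ≤ N) (β κ : ℝ) (hβ : 1 < β) (hκ : 0 < κ)
    (ν : Fin N → ℝ)
    (x : ℝ → Fin N → ℝ) (hx : IsCFSol N β κ ν x) :
    ∃ Cm > (0:ℝ), ∀ t ≥ (0:ℝ), ∀ i j : Fin N, i ≠ j → Cm ≤ |x t i - x t j| := by
  obtain ⟨δ, hδ, hrep⟩ := exists_csVelocity_lt_of_isClosestPair (by omega) hβ hκ ν
  set P := (Finset.univ.offDiag : Finset (Fin N × Fin N))
  have hsmall : ∀ᶠ c in 𝓝[>] (0 : ℝ), c < δ ∧ ∀ p ∈ P, c < |x 0 p.1 - x 0 p.2| := by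
    refine ((eventually_lt_nhds hδ).and ((Finset.eventually_all _).2 fun p hp ↦
      eventually_lt_nhds ?_)).filter_mono nhdsWithin_le_nhds
    exact abs_pos.2 (sub_ne_zero.2 ((hx.injective le_rfl).ne (Finset.mem_offDiag.1 hp).2.2))
  obtain ⟨c, ⟨hcδ, hc⟩, hc0⟩ := (hsmall.and self_mem_nhdsWithin).exists
  refine ⟨c, hc0, fun t ht i j hij ↦ le_of_not_gt fun hlt ↦ ?_⟩
  obtain ⟨u, ⟨hu0, -⟩, ⟨p, hp, hpu⟩, hbefore⟩ :=
    exists_first_hitting_time P ht (f := fun p s ↦ |x s p.1 - x s p.2|)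
      (fun p _ ↦ (((hx.continuousOn p.1).sub (hx.continuousOn p.2)).abs).mono Icc_subset_Ici_self)
      hc ⟨(i, j), by simpa [P] using hij, hlt.le⟩
  have : Nontrivial (Fin N) := Fin.nontrivial_iff_two_le.2 hN
  obtain ⟨a, b, hab⟩ := exists_isClosestPair (hx.injective hu0.le)
  have hgap : x u b - x u a ≤ c := (hab.2 p.1 p.2 (Finset.mem_offDiag.1 hp).2.2).trans hpu
  have hd := hx.hasDerivAt_sub a b hu0
  -- just before `u` the gap of the pair `(a, b)` was positive and smaller, hence below `c`
  obtain ⟨s, hsgap, hspos, hs0, hsu⟩ :=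
    ((hd.eventually_lt_of_pos (sub_pos.2 (hrep (x u) a b hab (by linarith)))).and
      (((hd.continuousAt.eventually (lt_mem_nhds (sub_pos.2 hab.1))).filter_mono
        nhdsWithin_le_nhds).and (Ioo_mem_nhdsLT hu0))).exists
  have hs := hbefore s ⟨hs0.le, hsu⟩ (b, a)
    (by simpa [P] using fun h : b = a ↦ hab.1.ne' (congrArg (x u) h))
  rw [abs_of_pos hspos] at hs
  linarith

/-- Uniform-in-time positive lower bound on all relative distances when `β > 1`. -/
theorem stmt8 (N : ℕ) (hN : 2 ≤ N) (β κ : ℝ) (hβ : 1 < β) (hκ : 0 < κ)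
    (ν : Fin N → ℝ) (hν : ∑ i, ν i = 0)
    (x : ℝ → Fin N → ℝ) (hx : IsCFSol N β κ ν x) :
    ∃ Cm > (0:ℝ), ∀ t ≥ (0:ℝ), ∀ i j : Fin N, i ≠ j → Cm ≤ |x t i - x t j| :=
  stmt8_general N hN β κ hβ hκ ν x hx
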